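/- arXiv:1512.06897 — 2 statements merged into one kernel-verified Lean document; each statement's English description precedes it below -/
import Mathlib

section
/- Fix a real number q ≥ 1 and abstract branch data satisfying the genus-growth condition. Then ‖Σ‖^q ≥ Σ_{i=1}^{g₁} 1/(2q)^{n(i)}. In particular ‖Σ‖^q ≥ 0. -/
open Finset

/-!
The genus-growth condition bounds `∑_{k=2}^{n+1} 1/g(i,k)` by the geometric sum
`∑_{k=2}^{n+1} 2^{-(k-1)} = 1 - 2^{-n}`, so the `i`-th summand of the grope length is at least
`q^{-n} · 2^{-n} = (2q)^{-n}` with `n = n(i)`; these lower bounds are positive.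
-/

lemma sum_Icc_one_div_two_pow_sub_one (n : ℕ) :
    ∑ k ∈ Icc 2 (n + 1), (1 : ℝ) / 2 ^ (k - 1) = 1 - 1 / 2 ^ n := by
  induction n with
  | zero => simp
  | succ n ih =>
    rw [sum_Icc_succ_top (by omega), ih, Nat.add_sub_cancel]
    field_simp
    ring

lemma one_div_two_pow_le_one_sub_sum_one_div {n : ℕ} {g : ℕ → ℝ}
    (hg : ∀ k ∈ Icc 2 (n + 1), (2 : ℝ) ^ (k - 1) ≤ g k) :
    1 / 2 ^ n ≤ 1 - ∑ k ∈ Icc 2 (n + 1), 1 / g k := by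
  have hsum : ∑ k ∈ Icc 2 (n + 1), 1 / g k ≤ ∑ k ∈ Icc 2 (n + 1), (1 : ℝ) / 2 ^ (k - 1) :=
    sum_le_sum fun k hk => one_div_le_one_div_of_le (by positivity) (hg k hk)
  rw [sum_Icc_one_div_two_pow_sub_one] at hsum
  linarith

lemma one_div_two_mul_pow_le_one_div_pow_mul_one_sub_sum {q : ℝ} (hq : 0 ≤ q) {n : ℕ} {g : ℕ → ℝ}
    (hg : ∀ k ∈ Icc 2 (n + 1), (2 : ℝ) ^ (k - 1) ≤ g k) :
    1 / (2 * q) ^ n ≤ 1 / q ^ n * (1 - ∑ k ∈ Icc 2 (n + 1), 1 / g k) :=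
  calc 1 / (2 * q) ^ n = 1 / q ^ n * (1 / 2 ^ n) := by rw [mul_pow, mul_comm, one_div_mul_one_div]
    _ ≤ 1 / q ^ n * (1 - ∑ k ∈ Icc 2 (n + 1), 1 / g k) :=
      mul_le_mul_of_nonneg_left (one_div_two_pow_le_one_sub_sum_one_div hg) (by positivity)

/-- Each branch of length `len i` contributes at least `1/(2q)^(len i)` to the grope
length `‖Σ‖^q = ∑_{i=1}^{g₁} q^{-len i} (1 - ∑_{k=2}^{len i + 1} 1/g(i,k))`, assuming
the genus-growth condition `g(i,k) ≥ 2^(k-1)`.  In particular the grope length is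
nonnegative. -/
theorem grope_length_lower_bound (q : ℝ) (hq : 1 ≤ q)
    (g₁ : ℕ) (len : ℕ → ℕ) (g : ℕ → ℕ → ℝ)
    (hgrowth : ∀ i ∈ Finset.Icc 1 g₁, ∀ k, 2 ≤ k → k ≤ len i + 1 →
      (2 : ℝ) ^ (k - 1) ≤ g i k) :
    (∑ i ∈ Finset.Icc 1 g₁, 1 / (2 * q) ^ len i ≤
      ∑ i ∈ Finset.Icc 1 g₁,
        (1 / q ^ len i) * (1 - ∑ k ∈ Finset.Icc 2 (len i + 1), 1 / g i k)) ∧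
    0 ≤ ∑ i ∈ Finset.Icc 1 g₁,
        (1 / q ^ len i) * (1 - ∑ k ∈ Finset.Icc 2 (len i + 1), 1 / g i k) := by
  have hq₀ : 0 ≤ q := zero_le_one.trans hq
  have hbound := sum_le_sum fun i hi =>
    one_div_two_mul_pow_le_one_div_pow_mul_one_sub_sum hq₀ (n := len i) (g := g i)
      fun k hk => hgrowth i hi k (mem_Icc.1 hk).1 (mem_Icc.1 hk).2
  exact ⟨hbound, (sum_nonneg fun i _ => by positivity).trans hbound⟩
end

section
/- Fix a real number q ≥ 1, an integer n ≥ 2, and abstract branch data satisfying the genus-growth condition. If some branch i₀ has length n(i₀) ≤ n−2, then ‖Σ‖^q ≥ 1/(2q)^{n−2} = 1/(q^{n−2}·2^{n−2}). -/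
/-!
Genus growth bounds `∑ₖ 1/g(i,k)` by the geometric sum `∑ₖ 2^{1-k} = 1 - 2^{-n(i)}`, so branch `i`
contributes at least `(2q)^{-n(i)} > 0` to the grope length. Dropping all other branches, the short
branch alone gives `(2q)^{-n(i₀)} ≥ (2q)^{-(n-2)}`.
-/

open Finset

noncomputable def branchLength (q : ℝ) (m : ℕ) (a : ℕ → ℝ) : ℝ :=
  1 / q ^ m * (1 - ∑ k ∈ Icc 2 (m + 1), 1 / a k)

lemma sum_Icc_two_half_pow (m : ℕ) :
    ∑ k ∈ Icc 2 (m + 1), (1 / 2 : ℝ) ^ (k - 1) = 1 - (1 / 2) ^ m := by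
  induction m with
  | zero => simp
  | succ m ih =>
    rw [sum_Icc_succ_top (by omega), ih, Nat.add_sub_cancel]
    ring

lemma half_pow_le_one_sub_sum_one_div {m : ℕ} {a : ℕ → ℝ}
    (ha : ∀ k, 2 ≤ k → k ≤ m + 1 → (2 : ℝ) ^ (k - 1) ≤ a k) :
    (1 / 2 : ℝ) ^ m ≤ 1 - ∑ k ∈ Icc 2 (m + 1), 1 / a k := by
  have hsum : ∑ k ∈ Icc 2 (m + 1), 1 / a k ≤ ∑ k ∈ Icc 2 (m + 1), (1 / 2 : ℝ) ^ (k - 1) := by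
    refine sum_le_sum fun k hk => ?_
    obtain ⟨hk₁, hk₂⟩ := mem_Icc.mp hk
    rw [one_div_pow]
    exact one_div_le_one_div_of_le (by positivity) (ha k hk₁ hk₂)
  linarith [sum_Icc_two_half_pow m]

lemma one_div_two_mul_pow_le_branchLength {q : ℝ} (hq : 0 < q) {m : ℕ} {a : ℕ → ℝ}
    (ha : ∀ k, 2 ≤ k → k ≤ m + 1 → (2 : ℝ) ^ (k - 1) ≤ a k) :
    1 / (2 * q) ^ m ≤ branchLength q m a :=
  calc 1 / (2 * q) ^ m = 1 / q ^ m * (1 / 2) ^ m := by rw [mul_pow, one_div_pow]; ring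
    _ ≤ branchLength q m a := by
      unfold branchLength
      gcongr
      exact half_pow_le_one_sub_sum_one_div ha

theorem grope_length_short_branch_bound_general (q : ℝ) (hq : 1 ≤ q) (n : ℕ)
    (g₁ : ℕ) (len : ℕ → ℕ) (g : ℕ → ℕ → ℝ)
    (hgrowth : ∀ i ∈ Finset.Icc 1 g₁, ∀ k, 2 ≤ k → k ≤ len i + 1 →
      (2 : ℝ) ^ (k - 1) ≤ g i k)
    (i₀ : ℕ) (hi₀ : i₀ ∈ Finset.Icc 1 g₁) (hshort : len i₀ ≤ n - 2) :
    1 / (2 * q) ^ (n - 2) ≤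
      ∑ i ∈ Finset.Icc 1 g₁,
        (1 / q ^ len i) * (1 - ∑ k ∈ Finset.Icc 2 (len i + 1), 1 / g i k) ∧
    1 / (2 * q) ^ (n - 2) = 1 / (q ^ (n - 2) * 2 ^ (n - 2)) := by
  have hq₀ : 0 < q := zero_lt_one.trans_le hq
  have hbranch (i : ℕ) (hi : i ∈ Icc 1 g₁) : 1 / (2 * q) ^ len i ≤ branchLength q (len i) (g i) :=
    one_div_two_mul_pow_le_branchLength hq₀ (hgrowth i hi)
  refine ⟨?_, by rw [mul_pow, mul_comm]⟩
  calc 1 / (2 * q) ^ (n - 2) ≤ 1 / (2 * q) ^ len i₀ :=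
        one_div_pow_le_one_div_pow_of_le (by linarith) hshort
    _ ≤ branchLength q (len i₀) (g i₀) := hbranch i₀ hi₀
    _ ≤ ∑ i ∈ Icc 1 g₁, branchLength q (len i) (g i) :=
        single_le_sum (fun i hi => (by positivity : (0 : ℝ) ≤ _).trans (hbranch i hi)) hi₀

/-- Proposition 2.8 of the paper, quantitative form: fix `q ≥ 1` and `n ≥ 2`, and
abstract branch data satisfying the genus-growth condition.  If some branch `i₀` has
length `len i₀ ≤ n - 2`, then the grope length
`‖Σ‖^q = ∑_{i=1}^{g₁} q^{-len i} (1 - ∑_{k=2}^{len i + 1} 1/g(i,k))` satisfies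
`‖Σ‖^q ≥ 1/(2q)^(n-2) = 1/(q^(n-2) · 2^(n-2))`. -/
theorem grope_length_short_branch_bound (q : ℝ) (hq : 1 ≤ q) (n : ℕ) (hn : 2 ≤ n)
    (g₁ : ℕ) (len : ℕ → ℕ) (g : ℕ → ℕ → ℝ)
    (hgrowth : ∀ i ∈ Finset.Icc 1 g₁, ∀ k, 2 ≤ k → k ≤ len i + 1 →
      (2 : ℝ) ^ (k - 1) ≤ g i k)
    (i₀ : ℕ) (hi₀ : i₀ ∈ Finset.Icc 1 g₁) (hshort : len i₀ ≤ n - 2) :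
    1 / (2 * q) ^ (n - 2) ≤
      ∑ i ∈ Finset.Icc 1 g₁,
        (1 / q ^ len i) * (1 - ∑ k ∈ Finset.Icc 2 (len i + 1), 1 / g i k) ∧
    1 / (2 * q) ^ (n - 2) = 1 / (q ^ (n - 2) * 2 ^ (n - 2)) :=
  grope_length_short_branch_bound_general q hq n g₁ len g hgrowth i₀ hi₀ hshort
end
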